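/- arXiv:2104.00910 — 3 statements merged into one kernel-verified Lean document; each statement's English description precedes it below -/
import Mathlib

section
/- Let μ₀, μ₁ be Borel probability measures on ℝ^m with finite second moments, and let γ be an optimal coupling of μ₀ and μ₁, i.e. a coupling with ∫ |x − y|² dγ(x,y) = W₂²(μ₀, μ₁). For t ∈ [0,1] define c_t = (u_t)_# γ where u_t(x,y) = (1−t)x + ty. Then for all 0 ≤ s ≤ t ≤ 1, W₂(c_s, c_t) ≤ (t − s)·W₂(μ₀, μ₁). -/
/-! The pushforward of `γ` under `p ↦ (u_s p, u_t p)` couples `c_s` and `c_t`, and since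
`u_s p - u_t p = (t - s) • (p.1 - p.2)` its cost is `(t - s)²` times the cost of `γ`,
which is `W₂²(μ₀, μ₁)` by optimality. -/

open MeasureTheory

/-- The squared Wasserstein distance of order 2: the infimum of `∫ d(x,y)² dπ` over all
couplings `π` of `μ` and `ν`. -/
noncomputable def W2sq {X : Type*} [MeasurableSpace X] [PseudoMetricSpace X]
    (μ ν : Measure X) : ℝ :=
  sInf {r : ℝ | ∃ π : Measure (X × X), π.map Prod.fst = μ ∧ π.map Prod.snd = ν ∧
    r = ∫ p, dist p.1 p.2 ^ 2 ∂π}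

/-- The Wasserstein distance of order 2. -/
noncomputable def W2 {X : Type*} [MeasurableSpace X] [PseudoMetricSpace X]
    (μ ν : Measure X) : ℝ :=
  Real.sqrt (W2sq μ ν)

section Coupling

variable {X : Type*} [MeasurableSpace X] [PseudoMetricSpace X]

theorem W2sq_le_integral {μ ν : Measure X} (π : Measure (X × X))
    (h₁ : π.map Prod.fst = μ) (h₂ : π.map Prod.snd = ν) :
    W2sq μ ν ≤ ∫ p, dist p.1 p.2 ^ 2 ∂π :=
  csInf_le ⟨0, by rintro r ⟨π', -, -, rfl⟩; exact integral_nonneg fun p => sq_nonneg _⟩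
    ⟨π, h₁, h₂, rfl⟩

theorem W2sq_map_le_integral [OpensMeasurableSpace X] [SecondCountableTopology X]
    {Y : Type*} [MeasurableSpace Y] (γ : Measure Y) {f g : Y → X}
    (hf : Measurable f) (hg : Measurable g) :
    W2sq (γ.map f) (γ.map g) ≤ ∫ y, dist (f y) (g y) ^ 2 ∂γ := by
  have hfg : Measurable fun y => (f y, g y) := hf.prodMk hg
  have hcost : Measurable fun p : X × X => dist p.1 p.2 ^ 2 := by fun_prop
  calc W2sq (γ.map f) (γ.map g)
      ≤ ∫ p, dist p.1 p.2 ^ 2 ∂(γ.map fun y => (f y, g y)) :=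
        W2sq_le_integral _ (by rw [Measure.map_map measurable_fst hfg]; rfl)
          (by rw [Measure.map_map measurable_snd hfg]; rfl)
    _ = ∫ y, dist (f y) (g y) ^ 2 ∂γ :=
        integral_map hfg.aemeasurable hcost.aestronglyMeasurable

end Coupling

theorem W2sq_map_interpolation_le {E : Type*} [NormedAddCommGroup E] [NormedSpace ℝ E]
    [MeasurableSpace E] [BorelSpace E] [SecondCountableTopology E]
    (γ : Measure (E × E)) (s t : ℝ) :
    W2sq (γ.map fun p => (1 - s) • p.1 + s • p.2) (γ.map fun p => (1 - t) • p.1 + t • p.2)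
      ≤ (t - s) ^ 2 * ∫ p, dist p.1 p.2 ^ 2 ∂γ := by
  have hdist (p : E × E) : dist ((1 - s) • p.1 + s • p.2) ((1 - t) • p.1 + t • p.2) ^ 2
      = (t - s) ^ 2 * dist p.1 p.2 ^ 2 := by
    rw [← AffineMap.lineMap_apply_module, ← AffineMap.lineMap_apply_module,
      dist_lineMap_lineMap, Real.dist_eq, mul_pow, sq_abs, ← neg_sub, neg_sq]
  calc _ ≤ ∫ p, dist ((1 - s) • p.1 + s • p.2) ((1 - t) • p.1 + t • p.2) ^ 2 ∂γ :=
        W2sq_map_le_integral γ (by fun_prop) (by fun_prop)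
    _ = (t - s) ^ 2 * ∫ p, dist p.1 p.2 ^ 2 ∂γ := by
        simp only [hdist, integral_const_mul]

theorem stmt3_general {m : ℕ}
    (μ₀ μ₁ : Measure (EuclideanSpace ℝ (Fin m)))
    (γ : Measure (EuclideanSpace ℝ (Fin m) × EuclideanSpace ℝ (Fin m)))
    (hopt : ∫ p, dist p.1 p.2 ^ 2 ∂γ = W2sq μ₀ μ₁)
    (c : ℝ → Measure (EuclideanSpace ℝ (Fin m)))
    (hc : ∀ t : ℝ, c t = γ.map (fun p => (1 - t) • p.1 + t • p.2)) :
    ∀ s t : ℝ, 0 ≤ s → s ≤ t → t ≤ 1 →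
      W2 (c s) (c t) ≤ (t - s) * W2 μ₀ μ₁ := by
  intro s t _ hst _
  have hsq : W2sq (c s) (c t) ≤ (t - s) ^ 2 * W2sq μ₀ μ₁ := by
    rw [hc, hc, ← hopt]
    exact W2sq_map_interpolation_le γ s t
  calc W2 (c s) (c t) ≤ √((t - s) ^ 2 * W2sq μ₀ μ₁) := Real.sqrt_le_sqrt hsq
    _ = (t - s) * W2 μ₀ μ₁ := by
        rw [Real.sqrt_mul (sq_nonneg _), Real.sqrt_sq (sub_nonneg.mpr hst)]
        rfl

/-- Displacement interpolation in `ℝ^m`: if `γ` is an optimal coupling of `μ₀` and `μ₁`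
and `c_t = (u_t)_#γ` with `u_t(x,y) = (1−t)x + ty`, then
`W₂(c_s, c_t) ≤ (t−s)·W₂(μ₀, μ₁)` for `0 ≤ s ≤ t ≤ 1`. -/
theorem stmt3 {m : ℕ}
    (μ₀ μ₁ : Measure (EuclideanSpace ℝ (Fin m)))
    [IsProbabilityMeasure μ₀] [IsProbabilityMeasure μ₁]
    (hm₀ : MemLp (fun x : EuclideanSpace ℝ (Fin m) => x) 2 μ₀)
    (hm₁ : MemLp (fun x : EuclideanSpace ℝ (Fin m) => x) 2 μ₁)
    (γ : Measure (EuclideanSpace ℝ (Fin m) × EuclideanSpace ℝ (Fin m)))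
    (hγ₁ : γ.map Prod.fst = μ₀) (hγ₂ : γ.map Prod.snd = μ₁)
    (hopt : ∫ p, dist p.1 p.2 ^ 2 ∂γ = W2sq μ₀ μ₁)
    (c : ℝ → Measure (EuclideanSpace ℝ (Fin m)))
    (hc : ∀ t : ℝ, c t = γ.map (fun p => (1 - t) • p.1 + t • p.2)) :
    ∀ s t : ℝ, 0 ≤ s → s ≤ t → t ≤ 1 →
      W2 (c s) (c t) ≤ (t - s) * W2 μ₀ μ₁ :=
  stmt3_general μ₀ μ₁ γ hopt c hc
end

section
/- Let ρ : ℝ^m → (0,∞) be continuously differentiable, μ = ρ·λ with λ Lebesgue measure, and for ψ of class C² set L^μψ = Δψ + ⟨∇(log ρ), ∇ψ⟩. Then for all smooth compactly supported functions ψ₁, ψ₂, ψ₃ : ℝ^m → ℝ, ∫ ⟨ (L^μψ₂)·∇ψ₁ − (L^μψ₁)·∇ψ₂, ∇ψ₃ ⟩ dμ = ∫ ( ∇²ψ₂(∇ψ₁, ∇ψ₃) − ∇²ψ₁(∇ψ₂, ∇ψ₃) ) dμ, where ∇²ψ denotes the Hessian bilinear form. -/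
open MeasureTheory RealInnerProductSpace
open scoped ENNReal NNReal

/-- The Laplacian of `ψ` on `ℝ^m`: the trace of the derivative of the gradient. -/
noncomputable def laplacian {m : ℕ} (ψ : EuclideanSpace ℝ (Fin m) → ℝ)
    (x : EuclideanSpace ℝ (Fin m)) : ℝ :=
  LinearMap.trace ℝ (EuclideanSpace ℝ (Fin m)) (fderiv ℝ (gradient ψ) x).toLinearMap

/-- The weighted Laplacian `L^μψ = Δψ + ⟨∇(log ρ), ∇ψ⟩` of the measure `μ = ρ·λ`. -/
noncomputable def Lmu {m : ℕ} (ρ ψ : EuclideanSpace ℝ (Fin m) → ℝ)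
    (x : EuclideanSpace ℝ (Fin m)) : ℝ :=
  laplacian ψ x + ⟪gradient (fun y => Real.log (ρ y)) x, gradient ψ x⟫

/-- The Hessian bilinear form `∇²ψ(u,v) = ⟨(D∇ψ)(x)u, v⟩`. -/
noncomputable def hess {m : ℕ} (ψ : EuclideanSpace ℝ (Fin m) → ℝ)
    (x u v : EuclideanSpace ℝ (Fin m)) : ℝ :=
  ⟪fderiv ℝ (gradient ψ) x u, v⟫

section Aux
variable {m : ℕ}
local notation "E" => EuclideanSpace ℝ (Fin m)

lemma inner_gradient_eq (f : E → ℝ) (x v : E) :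
    ⟪gradient f x, v⟫ = fderiv ℝ f x v := by
  simp [gradient, InnerProductSpace.toDual_symm_apply]

lemma gradient_coord (f : E → ℝ) (x : E) (i : Fin m) :
    gradient f x i = fderiv ℝ f x (EuclideanSpace.single i 1) := by
  have h := inner_gradient_eq f x (EuclideanSpace.single i 1)
  rw [← h, real_inner_comm, EuclideanSpace.inner_single_left]
  simp

lemma coord_eq_inner (w : E) (i : Fin m) : w i = ⟪w, EuclideanSpace.single i 1⟫ := by
  rw [real_inner_comm]
  simp [EuclideanSpace.inner_single_left]

lemma gradient_rep (f : E → ℝ) : gradient f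
    = fun x => ∑ i, fderiv ℝ f x (EuclideanSpace.single i 1) • (EuclideanSpace.single i 1 : E) := by
  funext x
  apply PiLp.ext
  intro j
  rw [coord_eq_inner (gradient f x) j,
    coord_eq_inner (∑ i, fderiv ℝ f x (EuclideanSpace.single i 1) • (EuclideanSpace.single i 1 : E)) j,
    sum_inner]
  simp only [real_inner_smul_left]
  rw [inner_gradient_eq]
  simp [real_inner_comm, EuclideanSpace.inner_single_left, EuclideanSpace.single_apply]

lemma vec_rep (v : E) : v = ∑ i, v i • (EuclideanSpace.single i 1 : E) := by
  apply PiLp.ext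
  intro j
  rw [coord_eq_inner v j,
    coord_eq_inner (∑ i, v i • (EuclideanSpace.single i 1 : E)) j, sum_inner]
  simp only [real_inner_smul_left]
  simp [EuclideanSpace.inner_single_right, EuclideanSpace.single_apply]

lemma clm_apply_sum (L : E →L[ℝ] ℝ) (v : E) :
    L v = ∑ i, v i * L (EuclideanSpace.single i 1) := by
  conv_lhs => rw [vec_rep v]
  rw [map_sum]
  simp [smul_eq_mul]

lemma gradient_eq_comp (f : E → ℝ) :
    gradient f
      = fun x => (InnerProductSpace.toDual ℝ (EuclideanSpace ℝ (Fin m))).symm (fderiv ℝ f x) := rfl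

lemma continuous_gradient {f : E → ℝ} (hf : ContDiff ℝ 1 f) : Continuous (gradient f) := by
  rw [gradient_eq_comp]
  exact (LinearIsometryEquiv.continuous _).comp (hf.continuous_fderiv one_ne_zero)

lemma hasCompactSupport_gradient {f : E → ℝ} (hf : HasCompactSupport f) :
    HasCompactSupport (gradient f) := by
  rw [gradient_eq_comp]
  exact (hf.fderiv (𝕜 := ℝ)).comp_left (map_zero _)

lemma contDiff_gradient {f : E → ℝ} (hf : ContDiff ℝ 2 f) : ContDiff ℝ 1 (gradient f) := by
  rw [gradient_rep]
  apply ContDiff.sum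
  intro i _
  exact ((hf.fderiv_right (m := 1) (by norm_num)).clm_apply contDiff_const).smul contDiff_const

lemma fderiv_apply_single {f : E → ℝ} (hf : ContDiff ℝ 2 f) (x u : E) (v : E) :
    fderiv ℝ (fun y => fderiv ℝ f y v) x u = fderiv ℝ (fderiv ℝ f) x u v := by
  have hdf : DifferentiableAt ℝ (fderiv ℝ f) x :=
    ((hf.fderiv_right (m := 1) (by norm_num)).differentiable one_ne_zero) x
  have h : HasFDerivAt (fun y => fderiv ℝ f y v)
      ((ContinuousLinearMap.apply ℝ ℝ v).comp (fderiv ℝ (fderiv ℝ f) x)) x := by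
    simpa [Function.comp_def] using (ContinuousLinearMap.hasFDerivAt
      (ContinuousLinearMap.apply ℝ ℝ v)).comp x hdf.hasFDerivAt
  rw [h.fderiv]; rfl

lemma fderiv_gradient_apply {f : E → ℝ} (hf : ContDiff ℝ 2 f) (x u : E) :
    fderiv ℝ (gradient f) x u
      = ∑ i, fderiv ℝ (fderiv ℝ f) x u (EuclideanSpace.single i 1) •
          (EuclideanSpace.single i 1 : E) := by
  rw [gradient_rep]
  have hdiff : ∀ i : Fin m,
      DifferentiableAt ℝ (fun y => fderiv ℝ f y (EuclideanSpace.single i 1)) x := by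
    intro i
    have hdf : DifferentiableAt ℝ (fderiv ℝ f) x :=
      ((hf.fderiv_right (m := 1) (by norm_num)).differentiable one_ne_zero) x
    exact (ContinuousLinearMap.apply ℝ ℝ (EuclideanSpace.single i 1)).differentiableAt.comp x hdf
  rw [fderiv_fun_sum (fun i _ => ((hdiff i).smul_const _))]
  simp only [ContinuousLinearMap.coe_sum', Finset.sum_apply]
  congr 1
  funext i
  rw [fderiv_smul_const (hdiff i)]
  simp [fderiv_apply_single hf]

lemma hess_eq {f : E → ℝ} (hf : ContDiff ℝ 2 f) (x u v : E) :
    hess f x u v = fderiv ℝ (fderiv ℝ f) x u v := by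
  rw [hess, fderiv_gradient_apply hf, sum_inner]
  rw [clm_apply_sum (fderiv ℝ (fderiv ℝ f) x u) v]
  apply Finset.sum_congr rfl
  intro i _
  rw [real_inner_smul_left]
  simp only [EuclideanSpace.inner_single_left, map_one, one_mul]
  ring

lemma hess_symm {f : E → ℝ} (hf : ContDiff ℝ 2 f) (x u v : E) :
    hess f x u v = hess f x v u := by
  rw [hess_eq hf, hess_eq hf]
  have h1 : ∀ y, HasFDerivAt f (fderiv ℝ f y) y :=
    fun y => ((hf.differentiable (by norm_num)) y).hasFDerivAt
  have h2 : HasFDerivAt (fderiv ℝ f) (fderiv ℝ (fderiv ℝ f) x) x :=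
    (((hf.fderiv_right (m := 1) (by norm_num)).differentiable one_ne_zero) x).hasFDerivAt
  exact second_derivative_symmetric h1 h2 u v

lemma laplacian_eq {f : E → ℝ} (hf : ContDiff ℝ 2 f) (x : E) :
    laplacian f x = ∑ i, fderiv ℝ (fderiv ℝ f) x (EuclideanSpace.single i 1)
      (EuclideanSpace.single i 1) := by
  rw [laplacian, LinearMap.trace_eq_matrix_trace ℝ (EuclideanSpace.basisFun (Fin m) ℝ).toBasis,
    Matrix.trace]
  apply Finset.sum_congr rfl
  intro i _
  rw [Matrix.diag_apply, LinearMap.toMatrix_apply]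
  simp only [OrthonormalBasis.coe_toBasis, OrthonormalBasis.coe_toBasis_repr_apply,
    EuclideanSpace.basisFun_apply, EuclideanSpace.basisFun_repr,
    ContinuousLinearMap.coe_coe]
  rw [coord_eq_inner (fderiv ℝ (gradient f) x (EuclideanSpace.single i 1)) i]
  exact hess_eq hf x _ _

lemma continuous_fderiv_fderiv {f : E → ℝ} (hf : ContDiff ℝ 2 f) :
    Continuous (fderiv ℝ (fderiv ℝ f)) :=
  (hf.fderiv_right (m := 1) (by norm_num)).continuous_fderiv one_ne_zero

lemma continuous_laplacian {f : E → ℝ} (hf : ContDiff ℝ 2 f) :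
    Continuous (laplacian f) := by
  have h : laplacian f = fun x => ∑ i, fderiv ℝ (fderiv ℝ f) x (EuclideanSpace.single i 1)
      (EuclideanSpace.single i 1) := funext (laplacian_eq hf)
  rw [h]
  apply continuous_finset_sum
  intro i _
  exact (((continuous_fderiv_fderiv hf).clm_apply continuous_const).clm_apply continuous_const)

lemma continuous_Lmu {ρ : E → ℝ} (hρ_pos : ∀ x, 0 < ρ x) (hρ : ContDiff ℝ 1 ρ)
    {ψ : E → ℝ} (hψ : ContDiff ℝ 2 ψ) : Continuous (Lmu ρ ψ) := by
  apply (continuous_laplacian hψ).add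
  have hlog : ContDiff ℝ 1 (fun y => Real.log (ρ y)) :=
    hρ.log (fun x => (hρ_pos x).ne')
  exact (continuous_gradient hlog).inner (continuous_gradient (hψ.of_le (by norm_num)))

lemma mul_Lmu {ρ : E → ℝ} (hρ_pos : ∀ x, 0 < ρ x) (hρ : ContDiff ℝ 1 ρ)
    {ψ : E → ℝ} (x : E) :
    ρ x * Lmu ρ ψ x = ρ x * laplacian ψ x + fderiv ℝ ρ x (gradient ψ x) := by
  rw [Lmu, mul_add]
  congr 1
  rw [inner_gradient_eq]
  have hρx := (hρ.differentiable one_ne_zero x).hasFDerivAt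
  have hlog : HasFDerivAt (fun y => Real.log (ρ y)) ((ρ x)⁻¹ • fderiv ℝ ρ x) x := by
    exact (Real.hasDerivAt_log (hρ_pos x).ne').comp_hasFDerivAt x hρx
  rw [hlog.fderiv]
  simp only [ContinuousLinearMap.coe_smul', Pi.smul_apply, smul_eq_mul]
  rw [← mul_assoc, mul_inv_cancel₀ (hρ_pos x).ne', one_mul]

/-- The fundamental integration by parts identity for the weighted Laplacian. -/
lemma ibp {ρ : E → ℝ} (hρ_pos : ∀ x, 0 < ρ x) (hρ : ContDiff ℝ 1 ρ)
    {f ψ : E → ℝ} (hf : ContDiff ℝ 1 f) (hfs : HasCompactSupport f)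
    (hψ : ContDiff ℝ 3 ψ) :
    ∫ x, ρ x * fderiv ℝ f x (gradient ψ x) = - ∫ x, ρ x * (Lmu ρ ψ x * f x) := by
  classical
  set e : Fin m → E := fun i => EuclideanSpace.single i 1 with he
  -- some continuity facts
  have hψ2 : ContDiff ℝ 2 ψ := hψ.of_le (by norm_num)
  have hψ1 : ContDiff ℝ 1 ψ := hψ.of_le (by norm_num)
  have hcρ : Continuous ρ := hρ.continuous
  have hcdψ : ∀ i, Continuous (fun x => fderiv ℝ ψ x (e i)) := fun i =>
    (hψ1.continuous_fderiv one_ne_zero).clm_apply continuous_const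
  have hcdf : ∀ i, Continuous (fun x => fderiv ℝ f x (e i)) := fun i =>
    (hf.continuous_fderiv one_ne_zero).clm_apply continuous_const
  -- the functions g i = ρ * ∂ᵢψ
  set g : Fin m → E → ℝ := fun i x => ρ x * fderiv ℝ ψ x (e i) with hg
  have hgi : ∀ i, ContDiff ℝ 1 (g i) := by
    intro i
    exact hρ.mul (((ContinuousLinearMap.apply ℝ ℝ (e i)).contDiff).comp
      (hψ2.fderiv_right (m := 1) (by norm_num)))
  have hcg : ∀ i, Continuous (g i) := fun i => (hgi i).continuous
  have hcdg : ∀ i, Continuous (fun x => fderiv ℝ (g i) x (e i)) := fun i =>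
    ((hgi i).continuous_fderiv one_ne_zero).clm_apply continuous_const
  -- step 1 : pointwise expansion of the left-hand side integrand
  have step1 : ∀ x, ρ x * fderiv ℝ f x (gradient ψ x)
      = ∑ i, g i x * fderiv ℝ f x (e i) := by
    intro x
    rw [clm_apply_sum (fderiv ℝ f x) (gradient ψ x), Finset.mul_sum]
    apply Finset.sum_congr rfl
    intro i _
    rw [gradient_coord]
    simp only [hg]
    ring
  -- integrability of the term-wise products
  have int1 : ∀ i : Fin m, Integrable (fun x => g i x * fderiv ℝ f x (e i)) volume := by
    intro i
    apply Continuous.integrable_of_hasCompactSupport ((hcg i).mul (hcdf i))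
    exact (hfs.fderiv_apply (𝕜 := ℝ) (e i)).mul_left
  have int2 : ∀ i : Fin m, Integrable (fun x => fderiv ℝ (g i) x (e i) * f x) volume := by
    intro i
    apply Continuous.integrable_of_hasCompactSupport ((hcdg i).mul hf.continuous)
    exact hfs.mul_left
  have int3 : ∀ i : Fin m, Integrable (fun x => g i x * f x) volume := by
    intro i
    apply Continuous.integrable_of_hasCompactSupport ((hcg i).mul hf.continuous)
    exact hfs.mul_left
  -- step 2 : integrate and apply one-dimensional integration by parts in each direction
  have step2 : ∀ i : Fin m, ∫ x, g i x * fderiv ℝ f x (e i)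
      = - ∫ x, fderiv ℝ (g i) x (e i) * f x := by
    intro i
    exact integral_mul_fderiv_eq_neg_fderiv_mul_of_integrable (int2 i) (int1 i) (int3 i)
      (fun y _ => (hgi i).differentiable one_ne_zero y) (fun y _ => hf.differentiable one_ne_zero y)
  -- step 3 : expand the derivative of g i
  have step3 : ∀ x, ∑ i, fderiv ℝ (g i) x (e i) = ρ x * Lmu ρ ψ x := by
    intro x
    have hdd : ∀ i : Fin m, DifferentiableAt ℝ (fun y => fderiv ℝ ψ y (e i)) x := by
      intro i
      exact (ContinuousLinearMap.apply ℝ ℝ (e i)).differentiableAt.comp x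
        (((hψ2.fderiv_right (m := 1) (by norm_num)).differentiable one_ne_zero) x)
    have expand : ∀ i : Fin m, fderiv ℝ (g i) x (e i)
        = fderiv ℝ ρ x (e i) * fderiv ℝ ψ x (e i)
          + ρ x * fderiv ℝ (fderiv ℝ ψ) x (e i) (e i) := by
      intro i
      have : fderiv ℝ (g i) x = ρ x • fderiv ℝ (fun y => fderiv ℝ ψ y (e i)) x
          + fderiv ℝ ψ x (e i) • fderiv ℝ ρ x :=
        fderiv_mul (hρ.differentiable one_ne_zero x) (hdd i)
      rw [this]
      simp only [ContinuousLinearMap.add_apply, ContinuousLinearMap.coe_smul', Pi.smul_apply,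
        smul_eq_mul]
      rw [fderiv_apply_single hψ2]
      ring
    rw [mul_Lmu hρ_pos hρ, laplacian_eq hψ2, Finset.mul_sum]
    rw [clm_apply_sum (fderiv ℝ ρ x) (gradient ψ x)]
    rw [Finset.sum_congr rfl (fun i _ => expand i), Finset.sum_add_distrib]
    rw [add_comm]
    congr 1
    apply Finset.sum_congr rfl
    intro i _
    rw [gradient_coord]
    simp only [he]
    ring
  calc ∫ x, ρ x * fderiv ℝ f x (gradient ψ x)
      = ∫ x, ∑ i, g i x * fderiv ℝ f x (e i) := by
        apply integral_congr_ae
        filter_upwards with x using step1 x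
    _ = ∑ i, ∫ x, g i x * fderiv ℝ f x (e i) := integral_finset_sum _ (fun i _ => int1 i)
    _ = ∑ i, - ∫ x, fderiv ℝ (g i) x (e i) * f x :=
        Finset.sum_congr rfl (fun i _ => step2 i)
    _ = - ∑ i, ∫ x, fderiv ℝ (g i) x (e i) * f x := by rw [Finset.sum_neg_distrib]
    _ = - ∫ x, ∑ i, fderiv ℝ (g i) x (e i) * f x := by
        rw [integral_finset_sum _ (fun i _ => int2 i)]
    _ = - ∫ x, ρ x * (Lmu ρ ψ x * f x) := by
        congr 1
        apply integral_congr_ae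
        filter_upwards with x
        rw [← Finset.sum_mul, step3 x]
        ring

lemma integral_withDensity (ρ : E → ℝ) (hρ_pos : ∀ x, 0 < ρ x) (hρ : Continuous ρ)
    (g : E → ℝ) :
    ∫ x, g x ∂(volume.withDensity (fun x => ENNReal.ofReal (ρ x)))
      = ∫ x, ρ x * g x := by
  have h : (fun x => ENNReal.ofReal (ρ x))
      = fun x => ((fun x => (ρ x).toNNReal) x : ℝ≥0∞) := rfl
  rw [h, integral_withDensity_eq_integral_smul (hρ.measurable.real_toNNReal) g]
  apply integral_congr_ae
  filter_upwards with x
  simp [NNReal.smul_def, Real.coe_toNNReal _ (hρ_pos x).le]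

end Aux

/-- The integrated Lie-bracket identity: for `μ = ρ·λ` with positive `C¹` density and
smooth compactly supported `ψ₁, ψ₂, ψ₃`,
`∫⟨(L^μψ₂)∇ψ₁ − (L^μψ₁)∇ψ₂, ∇ψ₃⟩ dμ = ∫ (∇²ψ₂(∇ψ₁,∇ψ₃) − ∇²ψ₁(∇ψ₂,∇ψ₃)) dμ`. -/
theorem stmt10 {m : ℕ} (ρ : EuclideanSpace ℝ (Fin m) → ℝ)
    (hρ_pos : ∀ x, 0 < ρ x) (hρ : ContDiff ℝ 1 ρ)
    (ψ₁ ψ₂ ψ₃ : EuclideanSpace ℝ (Fin m) → ℝ)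
    (h₁ : ContDiff ℝ (⊤ : ℕ∞) ψ₁) (h₁s : HasCompactSupport ψ₁)
    (h₂ : ContDiff ℝ (⊤ : ℕ∞) ψ₂) (h₂s : HasCompactSupport ψ₂)
    (h₃ : ContDiff ℝ (⊤ : ℕ∞) ψ₃) (h₃s : HasCompactSupport ψ₃) :
    ∫ x, ⟪Lmu ρ ψ₂ x • gradient ψ₁ x - Lmu ρ ψ₁ x • gradient ψ₂ x, gradient ψ₃ x⟫
        ∂(volume.withDensity (fun x => ENNReal.ofReal (ρ x)))
      = ∫ x, (hess ψ₂ x (gradient ψ₁ x) (gradient ψ₃ x)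
          - hess ψ₁ x (gradient ψ₂ x) (gradient ψ₃ x))
          ∂(volume.withDensity (fun x => ENNReal.ofReal (ρ x))) := by
  classical
  have h₁' : ContDiff ℝ 2 ψ₁ := h₁.of_le (WithTop.coe_le_coe.mpr le_top)
  have h₂' : ContDiff ℝ 2 ψ₂ := h₂.of_le (WithTop.coe_le_coe.mpr le_top)
  have h₃' : ContDiff ℝ 2 ψ₃ := h₃.of_le (WithTop.coe_le_coe.mpr le_top)
  -- gradients
  set g₁ := gradient ψ₁ with hg₁
  set g₂ := gradient ψ₂ with hg₂
  set g₃ := gradient ψ₃ with hg₃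
  have hcg₁ : ContDiff ℝ 1 g₁ := contDiff_gradient h₁'
  have hcg₂ : ContDiff ℝ 1 g₂ := contDiff_gradient h₂'
  have hcg₃ : ContDiff ℝ 1 g₃ := contDiff_gradient h₃'
  -- the inner products of gradients
  set F₁₃ : EuclideanSpace ℝ (Fin m) → ℝ := fun x => ⟪g₁ x, g₃ x⟫ with hF₁₃
  set F₂₃ : EuclideanSpace ℝ (Fin m) → ℝ := fun x => ⟪g₂ x, g₃ x⟫ with hF₂₃
  have hcF₁₃ : ContDiff ℝ 1 F₁₃ := hcg₁.inner ℝ hcg₃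
  have hcF₂₃ : ContDiff ℝ 1 F₂₃ := hcg₂.inner ℝ hcg₃
  have hsF₁₃ : HasCompactSupport F₁₃ := by
    apply (hasCompactSupport_gradient h₁s).mono
    intro x hx
    simp only [Function.mem_support] at hx ⊢
    intro h0
    exact hx (by simp only [hF₁₃, hg₁, h0, inner_zero_left])
  have hsF₂₃ : HasCompactSupport F₂₃ := by
    apply (hasCompactSupport_gradient h₂s).mono
    intro x hx
    simp only [Function.mem_support] at hx ⊢
    intro h0
    exact hx (by simp only [hF₂₃, hg₂, h0, inner_zero_left])
  -- rewrite both sides as volume integrals against the density ρ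
  rw [integral_withDensity ρ hρ_pos hρ.continuous, integral_withDensity ρ hρ_pos hρ.continuous]
  -- integrability facts
  have hL₁ : Continuous (Lmu ρ ψ₁) := continuous_Lmu hρ_pos hρ h₁'
  have hL₂ : Continuous (Lmu ρ ψ₂) := continuous_Lmu hρ_pos hρ h₂'
  have intA : Integrable (fun x => ρ x * (Lmu ρ ψ₂ x * F₁₃ x)) volume := by
    apply Continuous.integrable_of_hasCompactSupport
      (hρ.continuous.mul (hL₂.mul hcF₁₃.continuous))
    exact (hsF₁₃.mul_left).mul_left
  have intB : Integrable (fun x => ρ x * (Lmu ρ ψ₁ x * F₂₃ x)) volume := by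
    apply Continuous.integrable_of_hasCompactSupport
      (hρ.continuous.mul (hL₁.mul hcF₂₃.continuous))
    exact (hsF₂₃.mul_left).mul_left
  -- the left side equals ∫ ρ·(L₂ F₁₃) - ∫ ρ·(L₁ F₂₃)
  have lhs_eq : ∫ x, ρ x * ⟪Lmu ρ ψ₂ x • g₁ x - Lmu ρ ψ₁ x • g₂ x, g₃ x⟫
      = (∫ x, ρ x * (Lmu ρ ψ₂ x * F₁₃ x)) - ∫ x, ρ x * (Lmu ρ ψ₁ x * F₂₃ x) := by
    rw [← integral_sub intA intB]
    apply integral_congr_ae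
    filter_upwards with x
    rw [inner_sub_left, real_inner_smul_left, real_inner_smul_left]
    simp only [hF₁₃, hF₂₃]
    ring
  rw [lhs_eq]
  -- apply integration by parts to each term
  have ibp₂ : ∫ x, ρ x * (Lmu ρ ψ₂ x * F₁₃ x)
      = - ∫ x, ρ x * fderiv ℝ F₁₃ x (g₂ x) := by
    have h := ibp hρ_pos hρ hcF₁₃ hsF₁₃ (h₂.of_le (WithTop.coe_le_coe.mpr le_top)); linarith [h]
  have ibp₁ : ∫ x, ρ x * (Lmu ρ ψ₁ x * F₂₃ x)
      = - ∫ x, ρ x * fderiv ℝ F₂₃ x (g₁ x) := by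
    have h := ibp hρ_pos hρ hcF₂₃ hsF₂₃ (h₁.of_le (WithTop.coe_le_coe.mpr le_top)); linarith [h]
  rw [ibp₂, ibp₁]
  -- integrability for combining the two integrals
  have int₂ : Integrable (fun x => ρ x * fderiv ℝ F₁₃ x (g₂ x)) volume := by
    apply Continuous.integrable_of_hasCompactSupport
      (hρ.continuous.mul ((hcF₁₃.continuous_fderiv one_ne_zero).clm_apply hcg₂.continuous))
    apply HasCompactSupport.mul_left
    have := (hsF₁₃.fderiv (𝕜 := ℝ))
    apply this.mono
    intro x hx
    simp only [Function.mem_support] at hx ⊢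
    intro h0
    exact hx (by rw [h0]; simp)
  have int₁ : Integrable (fun x => ρ x * fderiv ℝ F₂₃ x (g₁ x)) volume := by
    apply Continuous.integrable_of_hasCompactSupport
      (hρ.continuous.mul ((hcF₂₃.continuous_fderiv one_ne_zero).clm_apply hcg₁.continuous))
    apply HasCompactSupport.mul_left
    have := (hsF₂₃.fderiv (𝕜 := ℝ))
    apply this.mono
    intro x hx
    simp only [Function.mem_support] at hx ⊢
    intro h0
    exact hx (by rw [h0]; simp)
  rw [show (- ∫ x, ρ x * fderiv ℝ F₁₃ x (g₂ x)) - (- ∫ x, ρ x * fderiv ℝ F₂₃ x (g₁ x))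
      = (∫ x, ρ x * fderiv ℝ F₂₃ x (g₁ x)) - ∫ x, ρ x * fderiv ℝ F₁₃ x (g₂ x) by ring]
  rw [← integral_sub int₁ int₂]
  -- pointwise identification with the Hessian terms
  apply integral_congr_ae
  filter_upwards with x
  have hd₁ : DifferentiableAt ℝ g₁ x := (hcg₁.differentiable one_ne_zero) x
  have hd₂ : DifferentiableAt ℝ g₂ x := (hcg₂.differentiable one_ne_zero) x
  have hd₃ : DifferentiableAt ℝ g₃ x := (hcg₃.differentiable one_ne_zero) x
  have e₁₃ : fderiv ℝ F₁₃ x (g₂ x)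
      = hess ψ₃ x (g₂ x) (g₁ x) + hess ψ₁ x (g₂ x) (g₃ x) := by
    rw [hF₁₃, fderiv_inner_apply (𝕜 := ℝ) hd₁ hd₃ (g₂ x)]
    rw [real_inner_comm ((fderiv ℝ g₃ x) (g₂ x)) (g₁ x)]
    rfl
  have e₂₃ : fderiv ℝ F₂₃ x (g₁ x)
      = hess ψ₃ x (g₁ x) (g₂ x) + hess ψ₂ x (g₁ x) (g₃ x) := by
    rw [hF₂₃, fderiv_inner_apply (𝕜 := ℝ) hd₂ hd₃ (g₁ x)]
    rw [real_inner_comm ((fderiv ℝ g₃ x) (g₁ x)) (g₂ x)]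
    rfl
  rw [e₁₃, e₂₃, hess_symm h₃' x (g₁ x) (g₂ x)]
  ring
end

section
/- Let ψ : ℝ^m → ℝ be of class C² with bounded gradient and bounded Hessian, and let (U_t)_{t∈ℝ} be the flow of ∇ψ. Let μ be a Borel probability measure on ℝ^m, c_t = (U_t)_#μ, and let φ₁, …, φ_k : ℝ^m → ℝ be bounded C¹ functions with bounded gradients. Define F(ν) = ∏_{i=1}^k ∫ φ_i dν. Then t ↦ F(c_t) is differentiable at t = 0 and (d/dt) F(c_t)|_{t=0} = ∑_{i=1}^k ( ∏_{j≠i} ∫ φ_j dμ ) · ∫ ⟨∇φ_i, ∇ψ⟩ dμ. -/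
/-!
Since `c_t = (U_t)_#μ`, each factor of `F(c_t)` is `∫ φᵢ ∘ U_t dμ`. Along a trajectory the chain
rule gives `d/dt φᵢ(U_t x) = ⟪∇φᵢ(U_t x), ∇ψ(U_t x)⟫`, which is bounded by `‖∇φᵢ‖_∞ ‖∇ψ‖_∞`, so
differentiation under the integral sign is legitimate; the product rule then assembles the factors.
The only delicate point is measurability of `U_t`: the bounded Hessian makes `∇ψ` Lipschitz, and
Grönwall's inequality (run backwards in time for `t < 0`) makes every `U_t` Lipschitz.
-/

open MeasureTheory RealInnerProductSpace

theorem ContDiff.gradient {F : Type*} [NormedAddCommGroup F] [InnerProductSpace ℝ F]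
    [CompleteSpace F] {f : F → ℝ} {m n : WithTop ℕ∞} (hf : ContDiff ℝ n f) (hmn : m + 1 ≤ n) :
    ContDiff ℝ m (gradient f) :=
  (InnerProductSpace.toDual ℝ F).symm.contDiff.comp (hf.fderiv_right hmn)

theorem HasGradientAt.comp_hasDerivAt {F : Type*} [NormedAddCommGroup F] [InnerProductSpace ℝ F]
    [CompleteSpace F] {f : F → ℝ} {g : F} {γ : ℝ → F} {γ' : F} {t : ℝ}
    (hf : HasGradientAt f g (γ t)) (hγ : HasDerivAt γ γ' t) :
    HasDerivAt (fun s => f (γ s)) ⟪g, γ'⟫ t := by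
  simpa only [Function.comp_def, InnerProductSpace.toDual_apply_apply] using
    (hasGradientAt_iff_hasFDerivAt.mp hf).comp_hasDerivAt t hγ

theorem lipschitzWith_of_norm_fderiv_le {E F : Type*} [NormedAddCommGroup E] [NormedSpace ℝ E]
    [NormedAddCommGroup F] [NormedSpace ℝ F] {f : E → F} {C : ℝ} (hf : Differentiable ℝ f)
    (bound : ∀ x, ‖fderiv ℝ f x‖ ≤ C) : LipschitzWith C.toNNReal f :=
  LipschitzWith.of_dist_le' fun x y => by
    simpa only [dist_eq_norm] using convex_univ.norm_image_sub_le_of_norm_fderiv_le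
      (fun z _ => hf z) (fun z _ => bound z) (Set.mem_univ y) (Set.mem_univ x)

section Flow

variable {E : Type*} [NormedAddCommGroup E] [NormedSpace ℝ E] {v : E → E} {K : NNReal}
  {U : ℝ → E → E}

theorem dist_flow_le_of_nonneg (hv : LipschitzWith K v)
    (hU : ∀ x t, HasDerivAt (fun s => U s x) (v (U t x)) t) (x y : E) {t : ℝ} (ht : 0 ≤ t) :
    dist (U t x) (U t y) ≤ dist (U 0 x) (U 0 y) * Real.exp (K * t) := by
  have hcont : ∀ z, Continuous fun s => U s z := fun z =>
    continuous_iff_continuousAt.2 fun s => (hU z s).continuousAt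
  simpa using dist_le_of_trajectories_ODE (v := fun _ => v) (fun _ => hv)
    (hcont x).continuousOn (fun s _ => (hU x s).hasDerivWithinAt)
    (hcont y).continuousOn (fun s _ => (hU y s).hasDerivWithinAt) le_rfl t ⟨ht, le_rfl⟩

theorem dist_flow_le (hv : LipschitzWith K v)
    (hU : ∀ x t, HasDerivAt (fun s => U s x) (v (U t x)) t) (x y : E) (t : ℝ) :
    dist (U t x) (U t y) ≤ dist (U 0 x) (U 0 y) * Real.exp (K * |t|) := by
  rcases le_total 0 t with ht | ht
  · simpa [abs_of_nonneg ht] using dist_flow_le_of_nonneg hv hU x y ht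
  · have hU_rev : ∀ z s, HasDerivAt (fun r => U (-r) z) (-v (U (-s) z)) s := fun z s => by
      simpa only [Function.comp_def, neg_one_smul] using (hU z (-s)).scomp s (hasDerivAt_neg s)
    simpa [abs_of_nonpos ht] using dist_flow_le_of_nonneg hv.neg hU_rev x y (neg_nonneg.2 ht)

theorem lipschitzWith_flow (hv : LipschitzWith K v)
    (hU : ∀ x t, HasDerivAt (fun s => U s x) (v (U t x)) t) (hU0 : ∀ x, U 0 x = x) (t : ℝ) :
    LipschitzWith (Real.exp (K * |t|)).toNNReal (U t) :=
  LipschitzWith.of_dist_le' fun x y => by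
    simpa only [hU0, mul_comm (dist x y)] using dist_flow_le hv hU x y t

end Flow

theorem hasDerivAt_integral_comp_flow {E : Type*} [NormedAddCommGroup E] [InnerProductSpace ℝ E]
    [CompleteSpace E] [MeasurableSpace E] [BorelSpace E] {μ : Measure E} [IsFiniteMeasure μ]
    {v : E → E} {U : ℝ → E → E} {f : E → ℝ} {Cf Cg Cv : ℝ}
    (hf : ContDiff ℝ 1 f) (hfb : ∀ x, |f x| ≤ Cf) (hfg : ∀ x, ‖gradient f x‖ ≤ Cg)
    (hv : Continuous v) (hvb : ∀ x, ‖v x‖ ≤ Cv) (hUc : ∀ t, Continuous (U t))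
    (hU : ∀ x t, HasDerivAt (fun s => U s x) (v (U t x)) t) (t₀ : ℝ) :
    HasDerivAt (fun t => ∫ x, f (U t x) ∂μ) (∫ x, ⟪gradient f (U t₀ x), v (U t₀ x)⟫ ∂μ) t₀ := by
  have hfc : Continuous f := hf.continuous
  have hgc : Continuous (gradient f) := (hf.gradient (zero_add _).le).continuous
  have hderiv : ∀ x t, HasDerivAt (fun s => f (U s x)) ⟪gradient f (U t x), v (U t x)⟫ t :=
    fun x t => ((hf.differentiable one_ne_zero _).hasGradientAt).comp_hasDerivAt (hU x t)
  have hbound : ∀ x t, ‖⟪gradient f (U t x), v (U t x)⟫‖ ≤ Cg * Cv := fun x t =>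
    (norm_inner_le_norm _ _).trans <|
      mul_le_mul (hfg _) (hvb _) (norm_nonneg _) ((norm_nonneg _).trans (hfg 0))
  have hint : Integrable (fun x => f (U t₀ x)) μ :=
    (integrable_const Cf).mono' (hfc.comp (hUc t₀)).aestronglyMeasurable
      (.of_forall fun x => hfb _)
  exact (hasDerivAt_integral_of_dominated_loc_of_deriv_le (Metric.ball_mem_nhds t₀ one_pos)
    (.of_forall fun t => (hfc.comp (hUc t)).aestronglyMeasurable) hint
    ((hgc.comp (hUc t₀)).inner (hv.comp (hUc t₀))).aestronglyMeasurable
    (.of_forall fun x t _ => hbound x t) (integrable_const _)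
    (.of_forall fun x t _ => hderiv x t)).2

/-- Derivative of a polynomial `F(ν) = ∏ᵢ ∫φᵢ dν` on Wasserstein space along the flow
of a constant vector field `V_ψ`: with `c_t = (U_t)_#μ` the flow of `∇ψ`,
`(d/dt)F(c_t)|_{t=0} = ∑ᵢ (∏_{j≠i} ∫φⱼ dμ)·∫⟨∇φᵢ, ∇ψ⟩ dμ`. -/
theorem stmt15 {m : ℕ} (ψ : EuclideanSpace ℝ (Fin m) → ℝ) (hψ : ContDiff ℝ 2 ψ)
    (K₁ K₂ : ℝ) (hgrad : ∀ x, ‖gradient ψ x‖ ≤ K₁)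
    (hhess : ∀ x, ‖fderiv ℝ (gradient ψ) x‖ ≤ K₂)
    (U : ℝ → EuclideanSpace ℝ (Fin m) → EuclideanSpace ℝ (Fin m))
    (hU0 : ∀ x, U 0 x = x)
    (hUflow : ∀ x t, HasDerivAt (fun s => U s x) (gradient ψ (U t x)) t)
    (μ : Measure (EuclideanSpace ℝ (Fin m))) [IsProbabilityMeasure μ]
    (k : ℕ) (φ : Fin k → EuclideanSpace ℝ (Fin m) → ℝ)
    (hφ : ∀ i, ContDiff ℝ 1 (φ i)) (Kf Kg : Fin k → ℝ)
    (hφb : ∀ i x, |φ i x| ≤ Kf i) (hφg : ∀ i x, ‖gradient (φ i) x‖ ≤ Kg i) :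
    HasDerivAt (fun t => ∏ i : Fin k, ∫ x, φ i x ∂(μ.map (U t)))
      (∑ i : Fin k, (∏ j ∈ Finset.univ.erase i, ∫ x, φ j x ∂μ)
        * ∫ x, ⟪gradient (φ i) x, gradient ψ x⟫ ∂μ) 0 := by
  have hgradψ : ContDiff ℝ 1 (gradient ψ) := hψ.gradient (by norm_num)
  have hUc : ∀ t, Continuous (U t) := fun t =>
    (lipschitzWith_flow (lipschitzWith_of_norm_fderiv_le (hgradψ.differentiable one_ne_zero) hhess)
      hUflow hU0 t).continuous
  have hfactor : ∀ i, HasDerivAt (fun t => ∫ x, φ i x ∂(μ.map (U t)))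
      (∫ x, ⟪gradient (φ i) x, gradient ψ x⟫ ∂μ) 0 := fun i => by
    simp_rw [integral_map (hUc _).aemeasurable (hφ i).continuous.aestronglyMeasurable]
    simpa only [hU0] using hasDerivAt_integral_comp_flow (hφ i) (hφb i) (hφg i)
      hgradψ.continuous hgrad hUc hUflow 0
  have hμ : μ.map (U 0) = μ := by rw [funext hU0, Measure.map_id']
  simpa only [smul_eq_mul, hμ] using HasDerivAt.fun_finsetProd (u := Finset.univ) fun i _ => hfactor i
end
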